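/- If p : ℕ → (0,1) satisfies p(n)²·n·log n ≤ 16/e⁵ for all n ≥ 2, then P(⟨G_{n,p(n)}⟩_{K_4} = E(K_n)) → 0 as n → ∞. -/

import Mathlib

open Finset

/-- The edge set of the copy of `H` under the injection `f`. -/
def copyEdges {W V : Type*} (H : SimpleGraph W) (f : W ↪ V) : Set (Sym2 V) :=
  Sym2.map f '' H.edgeSet

/-- One step of the `H`-bootstrap process: infect every edge `e` for which some copy of `H`
contains `e` and has all its other edges already infected. -/
def bootStep {W V : Type*} (H : SimpleGraph W) (E : Set (Sym2 V)) : Set (Sym2 V) :=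
  E ∪ {e | ∃ f : W ↪ V, e ∈ copyEdges H f ∧ copyEdges H f ⊆ insert e E}

/-- The closure of `E` under the `H`-bootstrap process. -/
def bootClosure {W V : Type*} (H : SimpleGraph W) (E : Set (Sym2 V)) : Set (Sym2 V) :=
  ⋃ t, (bootStep H)^[t] E

/-- `E` percolates in the `H`-bootstrap process on the complete graph on `V`. -/
def Percolates {W V : Type*} (H : SimpleGraph W) (E : Set (Sym2 V)) : Prop :=
  bootClosure H E = (⊤ : SimpleGraph V).edgeSet

/-- The expectation of `X` under the Erdős–Rényi random graph `G_{n,p}`,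
written as a sum over all graphs on `[n]`, weighted by their probabilities. -/
noncomputable def gnpExp (n : ℕ) (p : ℝ) (X : Finset (Sym2 (Fin n)) → ℝ) : ℝ :=
  ∑ E ∈ (⊤ : SimpleGraph (Fin n)).edgeFinset.powerset,
    p ^ E.card * (1 - p) ^ ((⊤ : SimpleGraph (Fin n)).edgeFinset.card - E.card) * X E

/- probability of event `A` under `G_{n,p}` -/
open Classical in
noncomputable def gnpProb (n : ℕ) (p : ℝ) (A : Finset (Sym2 (Fin n)) → Prop) : ℝ :=
  gnpExp n p (fun E => if A E then 1 else 0)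

/-- The critical probability for `H`-bootstrap percolation on `K_n`. -/
noncomputable def pc {W : Type*} (n : ℕ) (H : SimpleGraph W) : ℝ :=
  sInf {p : ℝ | p ∈ Set.Icc (0 : ℝ) 1 ∧
    1 / 2 ≤ gnpProb n p (fun E => Percolates H (↑E : Set (Sym2 (Fin n))))}

/-- `λ(r) = (C(r,2) - 2)/(r - 2)`. -/
noncomputable def lam (r : ℕ) : ℝ := ((r.choose 2 : ℝ) - 2) / ((r : ℝ) - 2)

/-!
If `E` percolates in the `K₄`-process on `[n]`, every pair is infected, and following how pairs
get infected (each step merges five internally spanned sets) shows that either some internally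
spanned set has size between `L = ⌈log n⌉` and `5L`, or the maximal internally spanned sets of
size below `L` cover all pairs while any two of them share at most one vertex.

`K₄`-bootstrap only adds edges that are dependent on the infected ones in the generic
two-dimensional rigidity matroid (realised by points on a parabola), so an internally spanned set
`S` contains at least `2|S| - 3` edges of `E`. In the first case the expected number of such
dense sets is `O(log n · n^{-2/5})` at `p² n log n ≤ 16/e⁵`; in the second case the double count
gives `|E| ≥ C(n, 2) / L`, which by Markov's inequality has probability at most `L p ≤ (log n + 1)
/ √n`.
-/

/-- The edges of `⟨E⟩_{K₄}`, generated one `K₄` at a time. -/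
inductive K4Infected {V : Type*} (E : Set (Sym2 V)) : Sym2 V → Prop
  | base {e : Sym2 V} (he : e ∈ E) : K4Infected E e
  | step {a b c d : V} (hab : a ≠ b) (hac : a ≠ c) (had : a ≠ d) (hbc : b ≠ c) (hbd : b ≠ d)
      (hcd : c ≠ d) (h₁ : K4Infected E s(a, c)) (h₂ : K4Infected E s(a, d))
      (h₃ : K4Infected E s(b, c)) (h₄ : K4Infected E s(b, d)) (h₅ : K4Infected E s(c, d)) :
      K4Infected E s(a, b)

namespace K4Infected

variable {V : Type*} {E F : Set (Sym2 V)} {e : Sym2 V}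

theorem mono (hEF : E ⊆ F) (h : K4Infected E e) : K4Infected F e := by
  induction h with
  | base he => exact base (hEF he)
  | step hab hac had hbc hbd hcd _ _ _ _ _ ih₁ ih₂ ih₃ ih₄ ih₅ =>
    exact step hab hac had hbc hbd hcd ih₁ ih₂ ih₃ ih₄ ih₅

theorem symm {u v : V} (h : K4Infected E s(u, v)) : K4Infected E s(v, u) := Sym2.eq_swap ▸ h

end K4Infected

section Bootstrap

variable {V : Type*}

theorem Fin.exists_two_others_of_ne : ∀ i j : Fin 4, i ≠ j →
    ∃ k l : Fin 4, k ≠ l ∧ i ≠ k ∧ i ≠ l ∧ j ≠ k ∧ j ≠ l := by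
  decide

theorem bootStep_subset_setOf_k4Infected {E S : Set (Sym2 V)}
    (hS : S ⊆ {e | K4Infected E e}) :
    bootStep (SimpleGraph.completeGraph (Fin 4)) S ⊆ {e | K4Infected E e} := by
  rintro _ (he | ⟨f, ⟨e₀, he₀, rfl⟩, hsub⟩)
  · exact hS he
  induction e₀ using Sym2.ind with
  | _ i j =>
  have hij : i ≠ j := he₀
  obtain ⟨k, l, hkl, hik, hil, hjk, hjl⟩ := Fin.exists_two_others_of_ne i j hij
  have other : ∀ {u v : Fin 4}, u ≠ v → s(u, v) ≠ s(i, j) → K4Infected E s(f u, f v) := by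
    intro u v huv hne
    rcases hsub ⟨s(u, v), huv, rfl⟩ with h | h
    · exact absurd (Sym2.map.injective f.injective h) hne
    · exact hS h
  have ne : ∀ {u v : Fin 4}, v ≠ i → v ≠ j → s(u, v) ≠ s(i, j) := by
    intro u v hvi hvj h
    rcases Sym2.eq_iff.mp h with h | h
    exacts [hvj h.2, hvi h.2]
  exact K4Infected.step (f.injective.ne hij) (f.injective.ne hik) (f.injective.ne hil)
    (f.injective.ne hjk) (f.injective.ne hjl) (f.injective.ne hkl)
    (other hik (ne hik.symm hjk.symm)) (other hil (ne hil.symm hjl.symm))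
    (other hjk (ne hik.symm hjk.symm)) (other hjl (ne hil.symm hjl.symm))
    (other hkl (ne hil.symm hjl.symm))

theorem bootClosure_subset_setOf_k4Infected (E : Set (Sym2 V)) :
    bootClosure (SimpleGraph.completeGraph (Fin 4)) E ⊆ {e | K4Infected E e} := by
  refine Set.iUnion_subset fun t => ?_
  induction t with
  | zero => exact fun _ => K4Infected.base
  | succ t ih =>
    rw [Function.iterate_succ_apply']
    exact bootStep_subset_setOf_k4Infected ih

theorem Percolates.k4Infected {E : Set (Sym2 V)}
    (h : Percolates (SimpleGraph.completeGraph (Fin 4)) E) {u v : V} (huv : u ≠ v) :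
    K4Infected E s(u, v) :=
  bootClosure_subset_setOf_k4Infected E (h ▸ huv)

end Bootstrap

section InternallySpanned

variable {V : Type*}

def PairsInfected (F : Set (Sym2 V)) (S : Finset V) : Prop :=
  ∀ u ∈ S, ∀ v ∈ S, u ≠ v → K4Infected F s(u, v)

variable {F : Set (Sym2 V)} {S : Finset V}

theorem PairsInfected.mono {E : Set (Sym2 V)} (hEF : E ⊆ F) (h : PairsInfected E S) :
    PairsInfected F S :=
  fun u hu v hv huv => (h u hu v hv huv).mono hEF

theorem pairsInfected_singleton (x : V) : PairsInfected F {x} := by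
  intro u hu v hv huv
  simp only [Finset.mem_singleton] at hu hv
  exact absurd (hu.trans hv.symm) huv

/-- `⟨E ∩ K_S⟩_{K₄} ⊇ K_S` in the paper's notation. -/
def IsInternallySpanned (E : Set (Sym2 V)) (S : Finset V) : Prop :=
  PairsInfected (E ∩ ↑S.sym2) S

variable {E : Set (Sym2 V)} {T W₁ W₂ : Finset V}

theorem IsInternallySpanned.pairsInfected_of_subset (h : IsInternallySpanned E S)
    (hST : S ⊆ T) : PairsInfected (E ∩ ↑T.sym2) S :=
  h.mono (Set.inter_subset_inter_right E (coe_subset.2 (sym2_mono hST)))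

variable [DecidableEq V]

theorem pairsInfected_insert {x : V} :
    PairsInfected F (insert x S) ↔
      PairsInfected F S ∧ ∀ v ∈ S, x ≠ v → K4Infected F s(x, v) := by
  refine ⟨fun h => ⟨fun u hu v hv => h u (mem_insert_of_mem hu) v (mem_insert_of_mem hv),
    fun v hv => h x (mem_insert_self x S) v (mem_insert_of_mem hv)⟩, ?_⟩
  rintro ⟨hS, hx⟩ u hu v hv huv
  rcases mem_insert.1 hu with rfl | hu' <;> rcases mem_insert.1 hv with rfl | hv'
  · exact absurd rfl huv
  · exact hx v hv' huv
  · exact (hx u hu' huv.symm).symm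
  · exact hS u hu' v hv' huv

/-- Two infected cliques sharing two vertices merge: every cross pair closes a `K₄`
with the two shared vertices. -/
theorem PairsInfected.union {x y : V} (h₁ : PairsInfected F W₁) (h₂ : PairsInfected F W₂)
    (hx₁ : x ∈ W₁) (hx₂ : x ∈ W₂) (hy₁ : y ∈ W₁) (hy₂ : y ∈ W₂) (hxy : x ≠ y) :
    PairsInfected F (W₁ ∪ W₂) := by
  have cross : ∀ u ∈ W₁, ∀ v ∈ W₂, u ≠ v → K4Infected F s(u, v) := by
    intro u hu v hv huv
    by_cases hu₂ : u ∈ W₂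
    · exact h₂ u hu₂ v hv huv
    by_cases hv₁ : v ∈ W₁
    · exact h₁ u hu v hv₁ huv
    have hux : u ≠ x := fun h => hu₂ (h ▸ hx₂)
    have huy : u ≠ y := fun h => hu₂ (h ▸ hy₂)
    have hvx : v ≠ x := fun h => hv₁ (h ▸ hx₁)
    have hvy : v ≠ y := fun h => hv₁ (h ▸ hy₁)
    exact .step huv hux huy hvx hvy hxy (h₁ u hu x hx₁ hux) (h₁ u hu y hy₁ huy)
      (h₂ v hv x hx₂ hvx) (h₂ v hv y hy₂ hvy) (h₁ x hx₁ y hy₁ hxy)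
  intro u hu v hv huv
  rcases mem_union.1 hu with hu | hu <;> rcases mem_union.1 hv with hv | hv
  · exact h₁ u hu v hv huv
  · exact cross u hu v hv huv
  · exact (cross v hv u hu huv.symm).symm
  · exact h₂ u hu v hv huv

theorem IsInternallySpanned.union {x y : V} (hS : IsInternallySpanned E S)
    (hT : IsInternallySpanned E T) (hxS : x ∈ S) (hxT : x ∈ T) (hyS : y ∈ S) (hyT : y ∈ T)
    (hxy : x ≠ y) : IsInternallySpanned E (S ∪ T) :=
  (hS.pairsInfected_of_subset subset_union_left).union
    (hT.pairsInfected_of_subset subset_union_right) hxS hxT hyS hyT hxy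

theorem isInternallySpanned_pair {u v : V} (he : s(u, v) ∈ E) :
    IsInternallySpanned E {u, v} := by
  refine pairsInfected_insert.2 ⟨pairsInfected_singleton v, fun w hw huw => ?_⟩
  rw [mem_singleton.1 hw]
  exact .base ⟨he, by simp⟩

theorem IsInternallySpanned.union_of_k4 {a b c d : V} (hab : a ≠ b) (hac : a ≠ c) (had : a ≠ d)
    (hbc : b ≠ c) (hbd : b ≠ d) (hcd : c ≠ d) {T₁ T₂ T₃ T₄ T₅ : Finset V}
    (h₁ : IsInternallySpanned E T₁) (h₂ : IsInternallySpanned E T₂)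
    (h₃ : IsInternallySpanned E T₃) (h₄ : IsInternallySpanned E T₄)
    (h₅ : IsInternallySpanned E T₅) (m₁ : s(a, c) ∈ T₁.sym2) (m₂ : s(a, d) ∈ T₂.sym2)
    (m₃ : s(b, c) ∈ T₃.sym2) (m₄ : s(b, d) ∈ T₄.sym2) (m₅ : s(c, d) ∈ T₅.sym2) :
    IsInternallySpanned E ({a, b, c, d} ∪ T₅ ∪ T₁ ∪ T₂ ∪ T₃ ∪ T₄) := by
  set U := {a, b, c, d} ∪ T₅ ∪ T₁ ∪ T₂ ∪ T₃ ∪ T₄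
  have sub : ∀ {T}, IsInternallySpanned E T → T ⊆ U → PairsInfected (E ∩ ↑U.sym2) T :=
    fun h hT => h.pairsInfected_of_subset hT
  have p₁ := sub h₁ (by intro x; simp +contextual [U])
  have p₂ := sub h₂ (by intro x; simp +contextual [U])
  have p₃ := sub h₃ (by intro x; simp +contextual [U])
  have p₄ := sub h₄ (by intro x; simp +contextual [U])
  have p₅ := sub h₅ (by intro x; simp +contextual [U])
  rw [mk_mem_sym2_iff] at m₁ m₂ m₃ m₄ m₅
  have iac := p₁ a m₁.1 c m₁.2 hac
  have iad := p₂ a m₂.1 d m₂.2 had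
  have ibc := p₃ b m₃.1 c m₃.2 hbc
  have ibd := p₄ b m₄.1 d m₄.2 hbd
  have icd := p₅ c m₅.1 d m₅.2 hcd
  have quad : PairsInfected (E ∩ ↑U.sym2) {a, b, c, d} := by
    simp only [pairsInfected_insert, pairsInfected_singleton, mem_insert, mem_singleton,
      forall_eq_or_imp, forall_eq]
    exact ⟨⟨⟨trivial, fun _ => icd⟩, fun _ => ibc, fun _ => ibd⟩,
      fun _ => .step hab hac had hbc hbd hcd iac iad ibc ibd icd, fun _ => iac, fun _ => iad⟩
  exact ((((quad.union p₅ (by simp) m₅.1 (by simp) m₅.2 hcd).union p₁ (by simp) m₁.1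
    (by simp [m₅.1]) m₁.2 hac).union p₂ (by simp) m₂.1 (by simp [m₅.2]) m₂.2 had).union p₃
    (by simp) m₃.1 (by simp [m₁.2]) m₃.2 hbc).union p₄ (by simp) m₄.1 (by simp [m₂.2]) m₄.2 hbd

/-- Aizenman–Lebowitz: an infection step merges five internally spanned sets, so sizes of
internally spanned sets can at most quintuple along a derivation. -/
theorem K4Infected.exists_isInternallySpanned {L : ℕ} (hL : 1 ≤ L) {e : Sym2 V}
    (he : K4Infected E e) :
    (∃ S : Finset V, IsInternallySpanned E S ∧ L ≤ #S ∧ #S ≤ 5 * L) ∨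
      ∃ S : Finset V, IsInternallySpanned E S ∧ e ∈ S.sym2 ∧ #S < L := by
  have classify : ∀ {S : Finset V} {e : Sym2 V}, IsInternallySpanned E S → e ∈ S.sym2 →
      #S ≤ 5 * L → (∃ S : Finset V, IsInternallySpanned E S ∧ L ≤ #S ∧ #S ≤ 5 * L) ∨
        ∃ S : Finset V, IsInternallySpanned E S ∧ e ∈ S.sym2 ∧ #S < L := by
    intro S e hS heS hcard
    by_cases hsmall : #S < L
    · exact .inr ⟨S, hS, heS, hsmall⟩
    · exact .inl ⟨S, hS, not_lt.1 hsmall, hcard⟩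
  induction he with
  | @base e he =>
    induction e using Sym2.ind with
    | _ u v =>
    exact classify (isInternallySpanned_pair he) (by simp)
      ((card_le_two (a := u) (b := v)).trans (by omega))
  | step hab hac had hbc hbd hcd _ _ _ _ _ ih₁ ih₂ ih₃ ih₄ ih₅ =>
    obtain h | ⟨T₁, h₁, m₁, c₁⟩ := ih₁; · exact .inl h
    obtain h | ⟨T₂, h₂, m₂, c₂⟩ := ih₂; · exact .inl h
    obtain h | ⟨T₃, h₃, m₃, c₃⟩ := ih₃; · exact .inl h
    obtain h | ⟨T₄, h₄, m₄, c₄⟩ := ih₄; · exact .inl h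
    obtain h | ⟨T₅, h₅, m₅, c₅⟩ := ih₅; · exact .inl h
    refine classify (h₁.union_of_k4 hab hac had hbc hbd hcd h₂ h₃ h₄ h₅ m₁ m₂ m₃ m₄ m₅)
      (by simp) ?_
    grw [card_union_le, card_union_le, card_union_le, card_union_le, card_union_le, card_le_four]
    omega

end InternallySpanned

section Rigidity

open Module Submodule

variable {V : Type*} (t : V → ℝ)

def momentPoint (v : V) : ℝ × ℝ := (t v, t v ^ 2)

variable {t} in
/-- Three points of a parabola are never collinear. -/
theorem momentPoint_sub_linearIndependent (ht : Function.Injective t) {w a b : V}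
    (hwa : w ≠ a) (hwb : w ≠ b) (hab : a ≠ b) {α β : ℝ}
    (h : α • (momentPoint t w - momentPoint t a) + β • (momentPoint t w - momentPoint t b) = 0) :
    α = 0 ∧ β = 0 := by
  have h₁ : α * (t w - t a) + β * (t w - t b) = 0 := congrArg Prod.fst h
  have h₂ : α * (t w ^ 2 - t a ^ 2) + β * (t w ^ 2 - t b ^ 2) = 0 := congrArg Prod.snd h
  have hα : α * ((t w - t a) * (t a - t b)) = 0 := by linear_combination h₂ - (t w + t b) * h₁
  have hβ : β * ((t w - t b) * (t b - t a)) = 0 := by linear_combination h₂ - (t w + t a) * h₁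
  simp only [mul_eq_zero, sub_eq_zero, ht.eq_iff, hwa, hwb, hab, hab.symm, or_false] at hα hβ
  exact ⟨hα, hβ⟩

variable [DecidableEq V]

/-- The row of the rigidity matrix of the framework placing `v` at `momentPoint t v`. -/
def rigidityVector (u v : V) : V → ℝ × ℝ :=
  Pi.single u (momentPoint t u - momentPoint t v) + Pi.single v (momentPoint t v - momentPoint t u)

def edgeRigidityVector : Sym2 V → V → ℝ × ℝ :=
  Sym2.lift ⟨rigidityVector t, fun _ _ => add_comm _ _⟩

def rigiditySpan (S : Finset V) : Submodule ℝ (V → ℝ × ℝ) :=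
  span ℝ (edgeRigidityVector t '' S.sym2)

variable {t}

@[simp]
theorem edgeRigidityVector_mk (u v : V) : edgeRigidityVector t s(u, v) = rigidityVector t u v :=
  rfl

theorem rigidityVector_self (u : V) : rigidityVector t u u = 0 := by
  simp [rigidityVector]

theorem rigidityVector_apply_of_ne {u v w : V} (hu : w ≠ u) (hv : w ≠ v) :
    rigidityVector t u v w = 0 := by
  simp [rigidityVector, hu, hv]

theorem rigidityVector_apply_left {u v : V} (huv : u ≠ v) :
    rigidityVector t u v u = momentPoint t u - momentPoint t v := by
  simp [rigidityVector, huv]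

/-- Any four points of the parabola carry an equilibrium stress: the weights `λᵢ λⱼ`, where
`λᵢ = 1 / ∏_{k ≠ i} (tᵢ - tₖ)` (here multiplied by a common factor to clear denominators),
balance at every vertex. -/
theorem rigidityVector_stress (a b c d : V) :
    let la := -((t b - t c) * (t b - t d) * (t c - t d))
    let lb := (t a - t c) * (t a - t d) * (t c - t d)
    let lc := -((t a - t b) * (t a - t d) * (t b - t d))
    let ld := (t a - t b) * (t a - t c) * (t b - t c)
    (la * lb) • rigidityVector t a b + (la * lc) • rigidityVector t a c +
      (la * ld) • rigidityVector t a d + (lb * lc) • rigidityVector t b c +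
      (lb * ld) • rigidityVector t b d + (lc * ld) • rigidityVector t c d = 0 := by
  funext w
  simp only [rigidityVector, momentPoint, Pi.add_apply, Pi.smul_apply, Pi.single_apply]
  split_ifs <;> subst_vars <;> ext <;> simp <;> ring

theorem K4Infected.edgeRigidityVector_mem_span (ht : Function.Injective t) {F : Set (Sym2 V)}
    {e : Sym2 V} (h : K4Infected F e) :
    edgeRigidityVector t e ∈ span ℝ (edgeRigidityVector t '' F) := by
  induction h with
  | base he => exact subset_span ⟨_, he, rfl⟩
  | @step a b c d hab hac had hbc hbd hcd _ _ _ _ _ ih₁ ih₂ ih₃ ih₄ ih₅ =>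
    have hstress := rigidityVector_stress (t := t) a b c d
    dsimp only at hstress
    set la := -((t b - t c) * (t b - t d) * (t c - t d))
    set lb := (t a - t c) * (t a - t d) * (t c - t d)
    set lc := -((t a - t b) * (t a - t d) * (t b - t d))
    set ld := (t a - t b) * (t a - t c) * (t b - t c)
    have hne : la * lb ≠ 0 := by
      simp only [la, lb, ne_eq, mul_eq_zero, neg_eq_zero, sub_eq_zero, ht.eq_iff, not_or]
      exact ⟨⟨⟨hbc, hbd⟩, hcd⟩, ⟨hac, had⟩, hcd⟩
    have hab' : (la * lb) • rigidityVector t a b = -((la * lc) • rigidityVector t a c +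
        (la * ld) • rigidityVector t a d + (lb * lc) • rigidityVector t b c +
        (lb * ld) • rigidityVector t b d + (lc * ld) • rigidityVector t c d) := by
      linear_combination (norm := module) hstress
    refine (smul_mem_iff _ hne).1 ?_
    rw [edgeRigidityVector_mk, hab']
    exact neg_mem (add_mem (add_mem (add_mem (add_mem (smul_mem _ _ ih₁) (smul_mem _ _ ih₂))
      (smul_mem _ _ ih₃)) (smul_mem _ _ ih₄)) (smul_mem _ _ ih₅))

instance (S : Finset V) : FiniteDimensional ℝ (rigiditySpan t S) :=
  FiniteDimensional.span_of_finite ℝ (S.sym2.finite_toSet.image _)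

theorem rigiditySpan_mono {S T : Finset V} (h : S ⊆ T) : rigiditySpan t S ≤ rigiditySpan t T :=
  span_mono (Set.image_mono (coe_subset.2 (sym2_mono h)))

theorem rigidityVector_mem_rigiditySpan {S : Finset V} {u v : V} (hu : u ∈ S) (hv : v ∈ S) :
    rigidityVector t u v ∈ rigiditySpan t S :=
  subset_span ⟨_, mk_mem_sym2_iff.2 ⟨hu, hv⟩, rfl⟩

theorem apply_eq_zero_of_mem_rigiditySpan {S : Finset V} {w : V} (hw : w ∉ S)
    {x : V → ℝ × ℝ} (hx : x ∈ rigiditySpan t S) : x w = 0 := by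
  suffices rigiditySpan t S ≤ LinearMap.ker (LinearMap.proj w) from this hx
  refine span_le.2 (Set.image_subset_iff.2 fun e he => ?_)
  induction e using Sym2.ind with
  | _ u v =>
  rw [mem_coe, mk_mem_sym2_iff] at he
  exact rigidityVector_apply_of_ne (ne_of_mem_of_not_mem he.1 hw).symm
    (ne_of_mem_of_not_mem he.2 hw).symm

theorem rigiditySpan_insert_ne_bot (ht : Function.Injective t) {S : Finset V} {w a : V}
    (hw : w ∉ S) (ha : a ∈ S) : rigiditySpan t (insert w S) ≠ ⊥ := by
  intro h
  have hwa : w ≠ a := (ne_of_mem_of_not_mem ha hw).symm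
  have h₀ : rigidityVector t w a = 0 :=
    (mem_bot ℝ).1 (h ▸ rigidityVector_mem_rigiditySpan (mem_insert_self w S)
      (mem_insert_of_mem ha))
  have h₁ := congrFun h₀ w
  rw [rigidityVector_apply_left hwa, Pi.zero_apply, sub_eq_zero] at h₁
  exact hwa (ht (congrArg Prod.fst h₁))

/-- The two new rows `w a` and `w b` are independent, and independent of all rows inside `S`,
since those vanish at `w`. -/
theorem finrank_rigiditySpan_add_two_le (ht : Function.Injective t) {S : Finset V} {w a b : V}
    (hw : w ∉ S) (ha : a ∈ S) (hb : b ∈ S) (hab : a ≠ b) :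
    finrank ℝ (rigiditySpan t S) + 2 ≤ finrank ℝ (rigiditySpan t (insert w S)) := by
  have hwa : w ≠ a := (ne_of_mem_of_not_mem ha hw).symm
  have hwb : w ≠ b := (ne_of_mem_of_not_mem hb hw).symm
  have key : ∀ α β : ℝ, (α • rigidityVector t w a + β • rigidityVector t w b) w = 0 →
      α = 0 ∧ β = 0 := fun α β h => by
    rw [Pi.add_apply, Pi.smul_apply, Pi.smul_apply, rigidityVector_apply_left hwa,
      rigidityVector_apply_left hwb] at h
    exact momentPoint_sub_linearIndependent ht hwa hwb hab h
  set Q := span ℝ {rigidityVector t w a, rigidityVector t w b}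
  have hQ : finrank ℝ Q = 2 := by
    have hli := LinearIndependent.pair_iff.2 fun α β h => key α β (by rw [h, Pi.zero_apply])
    have := finrank_span_eq_card hli
    rwa [Matrix.range_cons_cons_empty, Fintype.card_fin] at this
  have hPQ : rigiditySpan t S ⊓ Q = ⊥ := by
    refine disjoint_iff.1 (disjoint_def.2 fun x hxP hxQ => ?_)
    obtain ⟨α, β, rfl⟩ := mem_span_pair.1 hxQ
    obtain ⟨rfl, rfl⟩ := key α β (apply_eq_zero_of_mem_rigiditySpan hw hxP)
    simp
  have hle : rigiditySpan t S ⊔ Q ≤ rigiditySpan t (insert w S) := by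
    refine sup_le (rigiditySpan_mono (subset_insert w S)) (span_le.2 ?_)
    rw [Set.insert_subset_iff, Set.singleton_subset_iff]
    exact ⟨rigidityVector_mem_rigiditySpan (mem_insert_self w S) (mem_insert_of_mem ha),
      rigidityVector_mem_rigiditySpan (mem_insert_self w S) (mem_insert_of_mem hb)⟩
  have : FiniteDimensional ℝ Q := FiniteDimensional.span_of_finite ℝ (Set.toFinite _)
  have hsum := finrank_sup_add_finrank_inf_eq (rigiditySpan t S) Q
  rw [hPQ, finrank_bot, hQ] at hsum
  have := finrank_mono hle
  omega

/-- Henneberg: each new vertex adds two independent rows. -/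
theorem two_mul_card_sub_three_le_finrank_rigiditySpan (ht : Function.Injective t)
    (S : Finset V) : 2 * #S - 3 ≤ finrank ℝ (rigiditySpan t S) := by
  induction S using Finset.induction_on with
  | empty => simp
  | @insert w S hw ih =>
  rw [card_insert_of_notMem hw]
  rcases le_or_gt #S 1 with hS | hS
  · rcases S.eq_empty_or_nonempty with rfl | ⟨a, ha⟩
    · simp
    have := one_le_finrank_iff.2 (rigiditySpan_insert_ne_bot ht hw ha)
    omega
  · obtain ⟨a, ha, b, hb, hab⟩ := one_lt_card.1 hS
    have := finrank_rigiditySpan_add_two_le ht hw ha hb hab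
    omega

/-- `K₄`-infection stays inside the span of the rigidity rows, and the rows of all pairs in `S`
have rank at least `2|S| - 3`. -/
theorem IsInternallySpanned.two_mul_card_sub_three_le [Countable V] {E : Finset (Sym2 V)}
    {S : Finset V} (h : IsInternallySpanned (E : Set (Sym2 V)) S) :
    2 * #S - 3 ≤ #(E ∩ S.sym2) := by
  obtain ⟨f, hf⟩ := Countable.exists_injective_nat V
  set t : V → ℝ := fun v => f v
  have ht : Function.Injective t := Nat.cast_injective.comp hf
  classical
  have hspan : rigiditySpan t S ≤ span ℝ ((E ∩ S.sym2).image (edgeRigidityVector t)) := by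
    rw [coe_image]
    refine span_le.2 (Set.image_subset_iff.2 fun e he => ?_)
    induction e using Sym2.ind with
    | _ u v =>
    rw [mem_coe, mk_mem_sym2_iff] at he
    rcases eq_or_ne u v with rfl | huv
    · simp [rigidityVector_self]
    · simpa using (h u he.1 v he.2 huv).edgeRigidityVector_mem_span ht
  calc 2 * #S - 3 ≤ finrank ℝ (rigiditySpan t S) :=
        two_mul_card_sub_three_le_finrank_rigiditySpan ht S
    _ ≤ _ := finrank_mono hspan
    _ ≤ #((E ∩ S.sym2).image (edgeRigidityVector t)) := finrank_span_finset_le_card _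
    _ ≤ #(E ∩ S.sym2) := card_image_le

end Rigidity

section Counting

variable {V : Type*} [Fintype V] [DecidableEq V]

theorem choose_two_le_mul_card_of_pairCover {E : Finset (Sym2 V)} (hE : ∀ e ∈ E, ¬e.IsDiag)
    {L : ℕ} (𝓜 : Finset (Finset V)) (hcover : ∀ u v, u ≠ v → ∃ M ∈ 𝓜, u ∈ M ∧ v ∈ M)
    (hinter : ∀ M₁ ∈ 𝓜, ∀ M₂ ∈ 𝓜, ∀ u v, u ≠ v → u ∈ M₁ → v ∈ M₁ → u ∈ M₂ → v ∈ M₂ → M₁ = M₂)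
    (hdense : ∀ M ∈ 𝓜, (#M).choose 2 ≤ L * #(E ∩ M.sym2)) :
    (Fintype.card V).choose 2 ≤ L * #E := by
  have hsub : univ.offDiag.image Sym2.mk.uncurry ⊆
      𝓜.biUnion fun M => M.offDiag.image Sym2.mk.uncurry := by
    simp only [subset_iff, mem_image, mem_offDiag, mem_univ, true_and, mem_biUnion]
    rintro _ ⟨⟨u, v⟩, huv, rfl⟩
    obtain ⟨M, hM, hu, hv⟩ := hcover u v huv
    exact ⟨M, hM, (u, v), ⟨hu, hv, huv⟩, rfl⟩
  have hdisj : (𝓜 : Set (Finset V)).PairwiseDisjoint fun M => E ∩ M.sym2 := by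
    intro M₁ hM₁ M₂ hM₂ hne
    refine disjoint_left.2 fun e he₁ he₂ => ?_
    induction e using Sym2.ind with
    | _ u v =>
    simp only [mem_inter, mk_mem_sym2_iff] at he₁ he₂
    exact hne (hinter M₁ hM₁ M₂ hM₂ u v (hE _ he₁.1) he₁.2.1 he₁.2.2 he₂.2.1 he₂.2.2)
  calc (Fintype.card V).choose 2 = #(univ.offDiag.image Sym2.mk.uncurry) := by
        rw [Sym2.card_image_offDiag, card_univ]
    _ ≤ ∑ M ∈ 𝓜, #(M.offDiag.image Sym2.mk.uncurry) := (card_le_card hsub).trans card_biUnion_le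
    _ ≤ ∑ M ∈ 𝓜, L * #(E ∩ M.sym2) := sum_le_sum fun M hM => by
        rw [Sym2.card_image_offDiag]
        exact hdense M hM
    _ = L * #(𝓜.biUnion fun M => E ∩ M.sym2) := by rw [card_biUnion hdisj, mul_sum]
    _ ≤ L * #E :=
        Nat.mul_le_mul_left L (card_le_card (biUnion_subset.2 fun _ _ => inter_subset_left))

theorem Nat.choose_two_le_mul_two_mul_sub_three {m L : ℕ} (h : m < L) :
    m.choose 2 ≤ L * (2 * m - 3) := by
  obtain h₁ | ⟨k, rfl⟩ : m ≤ 1 ∨ ∃ k, m = k + 2 := by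
    rcases Nat.lt_or_ge m 2 with h | h
    · exact .inl (by omega)
    · exact .inr ⟨m - 2, by omega⟩
  · simp [Nat.choose_eq_zero_of_lt (by omega : m < 2)]
  · rw [Nat.choose_two_right]
    calc (k + 2) * (k + 2 - 1) / 2 ≤ (k + 2) * (k + 2 - 1) := Nat.div_le_self _ _
      _ ≤ L * (2 * (k + 2) - 3) := Nat.mul_le_mul (by omega) (by omega)

/-- In the second case the maximal internally spanned sets of size below `L` cover all pairs and
pairwise share at most one vertex. -/
theorem exists_dense_or_choose_two_le_mul_card {E : Finset (Sym2 V)} (hE : ∀ e ∈ E, ¬e.IsDiag)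
    {L : ℕ} (hL : 1 ≤ L) (hinf : ∀ u v : V, u ≠ v → K4Infected (E : Set (Sym2 V)) s(u, v)) :
    (∃ S : Finset V, L ≤ #S ∧ #S ≤ 5 * L ∧ 2 * #S - 3 ≤ #(E ∩ S.sym2)) ∨
      (Fintype.card V).choose 2 ≤ L * #E := by
  by_cases hmed : ∃ S, IsInternallySpanned (E : Set (Sym2 V)) S ∧ L ≤ #S ∧ #S ≤ 5 * L
  · obtain ⟨S, hS, h₁, h₂⟩ := hmed
    exact .inl ⟨S, h₁, h₂, hS.two_mul_card_sub_three_le⟩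
  push Not at hmed
  right
  set small : Finset V → Prop := fun S => IsInternallySpanned (E : Set (Sym2 V)) S ∧ #S < L
  classical
  refine choose_two_le_mul_card_of_pairCover hE {M | Maximal small M} (fun u v huv => ?_)
    (fun M₁ hM₁ M₂ hM₂ u v huv hu₁ hv₁ hu₂ hv₂ => ?_) (fun M hM => ?_)
  · obtain ⟨S, hS, hL', h5⟩ | ⟨S, hS, huvS, hSL⟩ := (hinf u v huv).exists_isInternallySpanned hL
    · exact absurd (hmed S hS hL') (not_lt.2 h5)
    obtain ⟨M, hSM, hM⟩ := Finite.exists_le_maximal (p := small) ⟨hS, hSL⟩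
    rw [mk_mem_sym2_iff] at huvS
    exact ⟨M, (mem_filter_univ _).2 hM, hSM huvS.1, hSM huvS.2⟩
  · rw [mem_filter_univ] at hM₁ hM₂
    have hU := hM₁.prop.1.union hM₂.prop.1 hu₁ hu₂ hv₁ hv₂ huv
    have hUL : #(M₁ ∪ M₂) < L := by
      by_contra! h
      have := hmed _ hU h
      have := card_union_le M₁ M₂
      have := hM₁.prop.2
      have := hM₂.prop.2
      omega
    exact le_antisymm (subset_union_left.trans (hM₂.le_of_ge ⟨hU, hUL⟩ subset_union_right))
      (subset_union_right.trans (hM₁.le_of_ge ⟨hU, hUL⟩ subset_union_left))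
  · rw [mem_filter_univ] at hM
    exact (Nat.choose_two_le_mul_two_mul_sub_three hM.prop.2).trans
      (Nat.mul_le_mul_left L hM.prop.1.two_mul_card_sub_three_le)

end Counting

section RandomGraph

theorem Finset.sum_powerset_pow_mul_pow_indicator_subset {α : Type*} [DecidableEq α]
    {U F : Finset α} (hF : F ⊆ U) (p : ℝ) :
    ∑ E ∈ U.powerset, p ^ #E * (1 - p) ^ (#U - #E) * (if F ⊆ E then 1 else 0) = p ^ #F := by
  have h := prod_add (fun _ => p) (fun i => if i ∈ F then 0 else 1 - p) U
  have hlhs : ∏ i ∈ U, (p + if i ∈ F then 0 else 1 - p) = p ^ #F := by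
    rw [prod_congr rfl fun i _ => show (p + if i ∈ F then 0 else 1 - p) =
      if i ∈ F then p else 1 by split_ifs <;> ring, prod_ite_mem, inter_eq_right.2 hF, prod_const]
  rw [hlhs] at h
  rw [h]
  refine sum_congr rfl fun E hE => ?_
  rw [mem_powerset] at hE
  rw [prod_const]
  split_ifs with hFE
  · rw [prod_congr rfl fun i hi => if_neg fun hiF => (mem_sdiff.1 hi).2 (hFE hiF), prod_const,
      card_sdiff_of_subset hE, mul_one]
  · obtain ⟨i, hiF, hiE⟩ := not_subset.1 hFE
    rw [prod_eq_zero (mem_sdiff.2 ⟨hF hiF, hiE⟩) (by simp [hiF]), mul_zero, mul_zero]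

variable {n : ℕ} {p : ℝ}

local notation "𝓔" n => SimpleGraph.edgeFinset (⊤ : SimpleGraph (Fin n))

theorem gnpExp_mono (hp₀ : 0 ≤ p) (hp₁ : p ≤ 1) {X Y : Finset (Sym2 (Fin n)) → ℝ}
    (h : ∀ E ⊆ 𝓔 n, X E ≤ Y E) : gnpExp n p X ≤ gnpExp n p Y :=
  sum_le_sum fun E hE => mul_le_mul_of_nonneg_left (h E (mem_powerset.1 hE))
    (mul_nonneg (pow_nonneg hp₀ _) (pow_nonneg (sub_nonneg.2 hp₁) _))

theorem gnpExp_add (X Y : Finset (Sym2 (Fin n)) → ℝ) :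
    gnpExp n p (fun E => X E + Y E) = gnpExp n p X + gnpExp n p Y := by
  simp only [gnpExp, mul_add, sum_add_distrib]

theorem gnpExp_sum {ι : Type*} (I : Finset ι) (X : ι → Finset (Sym2 (Fin n)) → ℝ) :
    gnpExp n p (fun E => ∑ i ∈ I, X i E) = ∑ i ∈ I, gnpExp n p (X i) := by
  simp only [gnpExp, mul_sum]
  exact sum_comm

theorem gnpExp_div_const (X : Finset (Sym2 (Fin n)) → ℝ) (c : ℝ) :
    gnpExp n p (fun E => X E / c) = gnpExp n p X / c := by
  simp only [gnpExp, sum_div, mul_div_assoc]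

theorem gnpExp_congr {X Y : Finset (Sym2 (Fin n)) → ℝ} (h : ∀ E ⊆ 𝓔 n, X E = Y E) :
    gnpExp n p X = gnpExp n p Y :=
  sum_congr rfl fun E hE => by rw [h E (mem_powerset.1 hE)]

theorem gnpProb_nonneg (hp₀ : 0 ≤ p) (hp₁ : p ≤ 1) (A : Finset (Sym2 (Fin n)) → Prop) :
    0 ≤ gnpProb n p A := by
  classical
  unfold gnpProb gnpExp
  refine sum_nonneg fun E _ => mul_nonneg (mul_nonneg (pow_nonneg hp₀ _)
    (pow_nonneg (sub_nonneg.2 hp₁) _)) ?_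
  dsimp only
  split_ifs <;> norm_num

theorem gnpProb_mono (hp₀ : 0 ≤ p) (hp₁ : p ≤ 1) {A B : Finset (Sym2 (Fin n)) → Prop}
    (h : ∀ E ⊆ 𝓔 n, A E → B E) : gnpProb n p A ≤ gnpProb n p B := by
  classical
  refine gnpExp_mono hp₀ hp₁ fun E hE => ?_
  by_cases hA : A E
  · simp [hA, h E hE hA]
  · simp only [hA, if_false]; split_ifs <;> norm_num

theorem gnpProb_le_add (hp₀ : 0 ≤ p) (hp₁ : p ≤ 1) {A B C : Finset (Sym2 (Fin n)) → Prop}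
    (h : ∀ E ⊆ 𝓔 n, A E → B E ∨ C E) : gnpProb n p A ≤ gnpProb n p B + gnpProb n p C := by
  classical
  rw [gnpProb, gnpProb, gnpProb, ← gnpExp_add]
  refine gnpExp_mono hp₀ hp₁ fun E hE => ?_
  by_cases hA : A E
  · rcases h E hE hA with hB | hC
    · simp only [hA, hB, if_true]; split_ifs <;> norm_num
    · simp only [hA, hC, if_true]; split_ifs <;> norm_num
  · simp only [hA, if_false]; split_ifs <;> norm_num

theorem gnpProb_le_sum (hp₀ : 0 ≤ p) (hp₁ : p ≤ 1) {ι : Type*} (I : Finset ι)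
    {A : Finset (Sym2 (Fin n)) → Prop} {B : ι → Finset (Sym2 (Fin n)) → Prop}
    (h : ∀ E ⊆ 𝓔 n, A E → ∃ i ∈ I, B i E) : gnpProb n p A ≤ ∑ i ∈ I, gnpProb n p (B i) := by
  classical
  simp only [gnpProb]
  rw [← gnpExp_sum]
  refine gnpExp_mono hp₀ hp₁ fun E hE => ?_
  have hnonneg : ∀ i ∈ I, (0 : ℝ) ≤ if B i E then 1 else 0 := fun i _ => by split_ifs <;> norm_num
  by_cases hA : A E
  · obtain ⟨i, hi, hB⟩ := h E hE hA
    simpa [hA, hB] using single_le_sum hnonneg hi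
  · simp only [hA, if_false]
    exact sum_nonneg hnonneg

theorem gnpProb_subset {F : Finset (Sym2 (Fin n))} (hF : F ⊆ 𝓔 n) :
    gnpProb n p (F ⊆ ·) = p ^ #F := by
  rw [← sum_powerset_pow_mul_pow_indicator_subset hF p, gnpProb, gnpExp]
  congr!

theorem gnpExp_card : gnpExp n p (fun E => #E) = (n.choose 2 : ℝ) * p := by
  classical
  calc gnpExp n p (fun E => #E) = ∑ f ∈ 𝓔 n, gnpProb n p ({f} ⊆ ·) := by
        simp only [gnpProb]
        rw [← gnpExp_sum]
        refine gnpExp_congr fun E hE => ?_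
        simp only [singleton_subset_iff]
        rw [sum_boole, filter_mem_eq_inter, inter_eq_right.2 hE]
    _ = ∑ f ∈ 𝓔 n, p := sum_congr rfl fun f hf => by
        rw [gnpProb_subset (singleton_subset_iff.2 hf), card_singleton, pow_one]
    _ = (n.choose 2 : ℝ) * p := by
        rw [sum_const, SimpleGraph.card_edgeFinset_top_eq_card_choose_two, Fintype.card_fin,
          nsmul_eq_mul]

/-- Markov's inequality for the number of edges. -/
theorem gnpProb_le_card_le (hp₀ : 0 ≤ p) (hp₁ : p ≤ 1) {t : ℝ} (ht : 0 < t) :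
    gnpProb n p (fun E => t ≤ #E) ≤ n.choose 2 * p / t := by
  classical
  rw [← gnpExp_card, ← gnpExp_div_const]
  refine gnpExp_mono hp₀ hp₁ fun E _ => ?_
  split_ifs with h
  · exact (one_le_div ht).2 h
  · positivity

theorem gnpProb_le_card_inter_le (hp₀ : 0 ≤ p) (hp₁ : p ≤ 1) (X : Finset (Sym2 (Fin n)))
    (k : ℕ) : gnpProb n p (fun E => k ≤ #(E ∩ X)) ≤ (#((𝓔 n) ∩ X)).choose k * p ^ k := by
  calc _ ≤ ∑ F ∈ ((𝓔 n) ∩ X).powersetCard k, gnpProb n p (F ⊆ ·) :=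
        gnpProb_le_sum hp₀ hp₁ _ fun E hE hk => by
          obtain ⟨F, hFE, hF⟩ := exists_subset_card_eq hk
          exact ⟨F, mem_powersetCard.2 ⟨hFE.trans (inter_subset_inter hE subset_rfl), hF⟩,
            hFE.trans inter_subset_left⟩
    _ = ∑ F ∈ ((𝓔 n) ∩ X).powersetCard k, p ^ k := sum_congr rfl fun F hF => by
        rw [mem_powersetCard] at hF
        rw [gnpProb_subset (hF.1.trans inter_subset_left), hF.2]
    _ = _ := by rw [sum_const, card_powersetCard, nsmul_eq_mul]

theorem SimpleGraph.card_edgeFinset_inter_sym2_le {V : Type*} [DecidableEq V] (G : SimpleGraph V)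
    [Fintype G.edgeSet] (S : Finset V) : #(G.edgeFinset ∩ S.sym2) ≤ (#S).choose 2 := by
  rw [← Sym2.card_image_offDiag]
  refine card_le_card fun e he => ?_
  induction e using Sym2.ind with
  | _ u v =>
  rw [mem_inter, mem_edgeFinset, mem_edgeSet, mk_mem_sym2_iff] at he
  exact mem_image.2 ⟨(u, v), mem_offDiag.2 ⟨he.2.1, he.2.2, he.1.ne⟩, rfl⟩

theorem gnpProb_exists_dense_le (hp₀ : 0 ≤ p) (hp₁ : p ≤ 1) (I : Finset ℕ) (f : ℕ → ℕ) :
    gnpProb n p (fun E => ∃ S : Finset (Fin n), #S ∈ I ∧ f #S ≤ #(E ∩ S.sym2)) ≤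
      ∑ s ∈ I, n.choose s * (s.choose 2).choose (f s) * p ^ f s := by
  calc _ ≤ ∑ sS ∈ I.sigma fun s => powersetCard s (univ : Finset (Fin n)),
        gnpProb n p (fun E => f sS.1 ≤ #(E ∩ sS.2.sym2)) :=
        gnpProb_le_sum hp₀ hp₁ _ fun E _ ⟨S, hS, hdense⟩ =>
          ⟨⟨#S, S⟩, mem_sigma.2 ⟨hS, mem_powersetCard_univ.2 rfl⟩, hdense⟩
    _ = ∑ s ∈ I, ∑ S ∈ powersetCard s univ, gnpProb n p (fun E => f s ≤ #(E ∩ S.sym2)) :=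
        sum_sigma _ _ _
    _ ≤ ∑ s ∈ I, ∑ S ∈ powersetCard s (univ : Finset (Fin n)),
        ((s.choose 2).choose (f s) * p ^ f s : ℝ) := by
        refine sum_le_sum fun s _ => sum_le_sum fun S hS => ?_
        rw [mem_powersetCard_univ] at hS
        refine (gnpProb_le_card_inter_le hp₀ hp₁ _ _).trans ?_
        gcongr
        exact hS ▸ SimpleGraph.card_edgeFinset_inter_sym2_le _ S
    _ = _ := by
        simp only [sum_const, card_powersetCard, card_univ, Fintype.card_fin, nsmul_eq_mul,
          mul_assoc]

theorem gnpProb_choose_two_le_mul_card_le (hp₀ : 0 ≤ p) (hp₁ : p ≤ 1) (hn : 2 ≤ n) {L : ℕ}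
    (hL : 0 < L) : gnpProb n p (fun E => n.choose 2 ≤ L * #E) ≤ L * p := by
  have hN : (0 : ℝ) < n.choose 2 := by exact_mod_cast Nat.choose_pos hn
  have hL' : (0 : ℝ) < L := by exact_mod_cast hL
  calc _ ≤ gnpProb n p (fun E => (n.choose 2 / L : ℝ) ≤ #E) :=
        gnpProb_mono hp₀ hp₁ fun E _ h => by
          rw [div_le_iff₀ hL', mul_comm]
          exact_mod_cast h
    _ ≤ n.choose 2 * p / (n.choose 2 / L) := gnpProb_le_card_le hp₀ hp₁ (by positivity)
    _ = L * p := by field_simp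

end RandomGraph

section Estimates

open Real

theorem Nat.choose_le_exp_one_mul_div_pow (m k : ℕ) :
    (m.choose k : ℝ) ≤ (exp 1 * m / k) ^ k := by
  rcases Nat.eq_zero_or_pos k with rfl | hk
  · simp
  have hk' : (0 : ℝ) < k := by exact_mod_cast hk
  calc (m.choose k : ℝ) ≤ m ^ k / k.factorial := Nat.choose_le_pow_div k m
    _ = (m / k : ℝ) ^ k * (k ^ k / k.factorial) := by
        rw [div_pow]; field_simp
    _ ≤ (m / k : ℝ) ^ k * exp k := by gcongr; exact pow_div_factorial_le_exp _ hk'.le k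
    _ = (exp 1 * m / k) ^ k := by rw [← exp_one_pow, mul_div_assoc, mul_pow, mul_comm]

theorem choose_mul_choose_mul_pow_le (n s k : ℕ) {q : ℝ} (hq : 0 ≤ q) :
    n.choose s * (s.choose 2).choose k * q ^ k ≤
      (exp 1 * n / s) ^ s * (exp 1 * s ^ 2 * q / (2 * k)) ^ k := by
  have hs2 : ((s.choose 2 : ℕ) : ℝ) ≤ s ^ 2 / 2 := by
    rw [Nat.cast_choose_two]
    nlinarith [(Nat.cast_nonneg s : (0 : ℝ) ≤ s)]
  calc n.choose s * (s.choose 2).choose k * q ^ k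
      ≤ (exp 1 * n / s) ^ s * ((exp 1 * (s ^ 2 / 2) / k) ^ k * q ^ k) := by
        rw [mul_assoc]
        gcongr
        · exact Nat.choose_le_exp_one_mul_div_pow n s
        · exact (Nat.choose_le_exp_one_mul_div_pow _ k).trans (by gcongr)
    _ = (exp 1 * n / s) ^ s * (exp 1 * s ^ 2 * q / (2 * k)) ^ k := by
        rw [← mul_pow]; congr 2; ring

/-- `x (log x - 2)` is convex, so on `[1, 5.03]` it is at most its larger endpoint value. -/
theorem mul_log_sub_two_le {x : ℝ} (h₁ : 1 ≤ x) (h₂ : x ≤ 5.03) : x * (log x - 2) ≤ -1.9 := by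
  have hconv : ConvexOn ℝ (Set.Ici 0) fun x : ℝ => x * log x - 2 * x :=
    convexOn_mul_log.sub ((concaveOn_id (convex_Ici 0)).smul (by norm_num : (0 : ℝ) ≤ 2))
  have hlog : log 5.03 ≤ 7 / 3 * log 2 := by
    have : log (5.03 ^ 3) ≤ log (2 ^ 7) := log_le_log (by norm_num) (by norm_num)
    rw [log_pow, log_pow] at this
    push_cast at this
    linarith
  have hseg := hconv.le_on_segment (x := 1) (y := 5.03) (by norm_num) (by norm_num)
    (by rw [segment_eq_Icc (by norm_num)]; exact ⟨h₁, h₂⟩)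
  simp only [log_one, mul_zero, zero_sub, mul_one] at hseg
  have hmax : max (-2) (5.03 * log 5.03 - 2 * 5.03) ≤ -1.9 :=
    max_le (by norm_num) (by nlinarith [log_two_lt_d9])
  linarith

/-- `choose_mul_choose_mul_pow_le_exp` splits `(e N / s)^s Y^(2s-3)` as
`(e N Y² / s)^s · Y⁻³`; this bounds the base of the first factor. -/
theorem exp_one_mul_div_mul_sq_le {N q s ℓ : ℝ} (hs : 3 ≤ s) (hℓ : 0 < ℓ)
    (hq : q ^ 2 * N * ℓ = 16 / exp 1 ^ 5) :
    exp 1 * N / s * (exp 1 * s ^ 2 * q / (2 * (2 * s - 3))) ^ 2 ≤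
      exp (6 / (2 * s - 3) + log (s / ℓ) - 2) := by
  have hk : 0 < 2 * s - 3 := by linarith
  have hq' : q ^ 2 * N * ℓ * exp 1 ^ 5 = 16 := by rw [hq]; field_simp
  have h2s : 2 * s / (2 * s - 3) ≤ exp (3 / (2 * s - 3)) := by
    have := add_one_le_exp (3 / (2 * s - 3))
    rwa [div_add_one hk.ne', show 3 + (2 * s - 3) = 2 * s by ring] at this
  have heq : exp 1 * N / s * (exp 1 * s ^ 2 * q / (2 * (2 * s - 3))) ^ 2 =
      (2 * s / (2 * s - 3)) ^ 2 * (s / ℓ) / exp 1 ^ 2 := by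
    field_simp
    rw [show (2 : ℝ) ^ 4 = 16 by norm_num, ← hq']
    ring
  have h6 : exp (6 / (2 * s - 3)) = exp (3 / (2 * s - 3)) ^ 2 := by rw [← exp_nat_mul]; ring_nf
  have he2 : exp 2 = exp 1 ^ 2 := by rw [← exp_nat_mul]; norm_num
  rw [heq, exp_sub, exp_add, exp_log (by positivity), h6, he2]
  gcongr

theorem exp_six_div_add_log_sub_two_pow_le {s : ℕ} {ℓ : ℝ} (hℓ : 0 < ℓ) (hs : 3 ≤ s)
    (hs₁ : ℓ ≤ s) (hs₂ : s ≤ 5.03 * ℓ) :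
    exp (6 / (2 * s - 3) + log (s / ℓ) - 2) ^ s ≤ exp (6 - 1.9 * ℓ) := by
  have hs' : (3 : ℝ) ≤ s := by exact_mod_cast hs
  rw [← exp_nat_mul, exp_le_exp]
  have hsk : (s : ℝ) * (6 / (2 * s - 3)) ≤ 6 := by
    rw [mul_div_assoc', div_le_iff₀ (by linarith)]
    linarith
  have hsx : (s : ℝ) * (log (s / ℓ) - 2) = ℓ * (s / ℓ * (log (s / ℓ) - 2)) := by field_simp
  calc (s : ℝ) * (6 / (2 * s - 3) + log (s / ℓ) - 2) =
        s * (6 / (2 * s - 3)) + ℓ * (s / ℓ * (log (s / ℓ) - 2)) := by rw [← hsx]; ring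
    _ ≤ 6 + ℓ * (-1.9) := by
        gcongr
        exact mul_log_sub_two_le ((one_le_div hℓ).2 hs₁) ((div_le_iff₀ hℓ).2 hs₂)
    _ = 6 - 1.9 * ℓ := by ring

theorem inv_le_exp_of_sq_mul_mul_eq {q s ℓ : ℝ} (hq : 0 < q) (hℓ : 1 ≤ ℓ) (hs : 3 ≤ s)
    (hs₁ : ℓ ≤ s) (hqn : q ^ 2 * exp ℓ * ℓ = 16 / exp 1 ^ 5) :
    (exp 1 * s ^ 2 * q / (2 * (2 * s - 3)))⁻¹ ≤ exp ((3 + ℓ) / 2) := by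
  have hq' : q ^ 2 * exp ℓ * ℓ * exp 1 ^ 5 = 16 := by rw [hqn]; field_simp
  have hY₁ : exp 1 * ℓ * q / 4 ≤ exp 1 * s ^ 2 * q / (2 * (2 * s - 3)) := by
    rw [div_le_div_iff₀ (by norm_num) (by linarith)]
    have : ℓ * (2 * (2 * s - 3)) ≤ s ^ 2 * 4 := by nlinarith
    have := exp_pos 1
    calc exp 1 * ℓ * q * (2 * (2 * s - 3)) = exp 1 * q * (ℓ * (2 * (2 * s - 3))) := by ring
      _ ≤ exp 1 * q * (s ^ 2 * 4) := by gcongr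
      _ = exp 1 * s ^ 2 * q * 4 := by ring
  have hY₂ : exp (-((3 + ℓ) / 2)) ≤ exp 1 * ℓ * q / 4 := by
    rw [← pow_le_pow_iff_left₀ (by positivity) (by positivity) two_ne_zero, ← exp_nat_mul,
      show ((2 : ℕ) : ℝ) * -((3 + ℓ) / 2) = -(3 + ℓ) by push_cast; ring, exp_neg, exp_add,
      show exp 3 = exp 1 ^ 3 by rw [← exp_nat_mul]; norm_num,
      inv_le_iff_one_le_mul₀ (by positivity)]
    have : (exp 1 * ℓ * q / 4) ^ 2 * (exp 1 ^ 3 * exp ℓ) = ℓ := by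
      linear_combination (ℓ / 16) * hq'
    linarith
  calc _ ≤ (exp (-((3 + ℓ) / 2)))⁻¹ := inv_anti₀ (exp_pos _) (hY₂.trans hY₁)
    _ = exp ((3 + ℓ) / 2) := by rw [← exp_neg, neg_neg]

/-- The left side bounds the expected number of `s`-sets spanning `2s - 3` edges at
density `q`. -/
theorem choose_mul_choose_mul_pow_le_exp {n s : ℕ} {q : ℝ} (hq : 0 < q)
    (hqn : q ^ 2 * n * log n = 16 / exp 1 ^ 5) (hℓ : 200 ≤ log n) (hs₁ : log n ≤ s)
    (hs₂ : s ≤ 5 * log n + 5) :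
    n.choose s * (s.choose 2).choose (2 * s - 3) * q ^ (2 * s - 3) ≤
      exp (21 / 2 - 2 / 5 * log n) := by
  set ℓ := log n
  have hn : (n : ℝ) = exp ℓ :=
    (exp_log (Nat.cast_pos.2 (Nat.pos_of_ne_zero fun h => by simp [ℓ, h] at hℓ; linarith))).symm
  have hs3 : 3 ≤ s := by exact_mod_cast (by linarith : (3 : ℝ) ≤ s)
  have hs3' : (3 : ℝ) ≤ s := by exact_mod_cast hs3
  have hk : ((2 * s - 3 : ℕ) : ℝ) = 2 * s - 3 := by
    push_cast [Nat.cast_sub (by omega : 3 ≤ 2 * s)]; ring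
  set Y := exp 1 * s ^ 2 * q / (2 * (2 * s - 3))
  have hY : 0 < Y := by simp only [Y]; exact div_pos (by positivity) (by linarith)
  calc _ ≤ (exp 1 * n / s) ^ s * Y ^ (2 * s - 3) := by
        simpa only [hk] using choose_mul_choose_mul_pow_le n s (2 * s - 3) hq.le
    _ = (exp 1 * n / s * Y ^ 2) ^ s * Y⁻¹ ^ 3 := by
        have h2s : Y ^ (2 * s) = Y ^ (2 * s - 3) * Y ^ 3 := by rw [← pow_add]; congr 1; omega
        rw [mul_pow, ← pow_mul, h2s, inv_pow, ← mul_assoc,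
          mul_inv_cancel_right₀ (pow_ne_zero 3 hY.ne')]
    _ ≤ exp (6 / (2 * s - 3) + log (s / ℓ) - 2) ^ s * exp ((3 + ℓ) / 2) ^ 3 := by
        gcongr
        · exact exp_one_mul_div_mul_sq_le hs3' (by linarith) hqn
        · exact inv_le_exp_of_sq_mul_mul_eq hq (by linarith) hs3' hs₁ (hn ▸ hqn)
    _ ≤ exp (6 - 1.9 * ℓ) * exp ((3 + ℓ) / 2) ^ 3 := by
        gcongr
        exact exp_six_div_add_log_sub_two_pow_le (by linarith) hs3 hs₁ (by linarith)
    _ = exp (21 / 2 - 2 / 5 * ℓ) := by rw [← exp_nat_mul, ← exp_add]; norm_num; ring_nf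

theorem Nat.two_le_of_log_pos {n : ℕ} (h : 0 < Real.log n) : 2 ≤ n :=
  Nat.one_lt_cast.1 ((Real.log_pos_iff (Nat.cast_nonneg n)).1 h)

theorem tendsto_affine_mul_exp_neg_mul (a b : ℝ) {c : ℝ} (hc : 0 < c) :
    Filter.Tendsto (fun x => (a * x + b) * exp (-(c * x))) Filter.atTop (nhds 0) := by
  have hcx := Filter.tendsto_id.const_mul_atTop hc
  have h₁ := (tendsto_pow_mul_exp_neg_atTop_nhds_zero 1).comp hcx
  have h₀ := (tendsto_pow_mul_exp_neg_atTop_nhds_zero 0).comp hcx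
  convert (h₁.const_mul (a / c)).add (h₀.const_mul b) using 1
  · ext x
    simp only [Function.comp_apply, id, pow_one, pow_zero, one_mul]
    field_simp
  · simp

end Estimates

section Threshold

open Real

variable {n : ℕ} {p : ℝ}

theorem gnpProb_exists_dense_le_exp (hp₀ : 0 ≤ p) (hp₁ : p ≤ 1)
    (hpn : p ^ 2 * n * log n ≤ 16 / exp 1 ^ 5) (hℓ : 200 ≤ log n) {L : ℕ} (hL₁ : log n ≤ L)
    (hL₂ : L < log n + 1) :
    gnpProb n p (fun E => ∃ S : Finset (Fin n), #S ∈ Icc L (5 * L) ∧ 2 * #S - 3 ≤ #(E ∩ S.sym2))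
      ≤ exp (21 / 2) * ((4 * log n + 5) * exp (-(2 / 5 * log n))) := by
  set ℓ := log n
  have hn0 : (0 : ℝ) < n := by linarith [(log_pos_iff n.cast_nonneg).1 (by linarith : 0 < ℓ)]
  set q := √(16 / exp 1 ^ 5 / (n * ℓ))
  have hq : q ^ 2 * n * ℓ = 16 / exp 1 ^ 5 := by
    rw [sq_sqrt (by positivity)]
    field_simp
  have hq0 : 0 < q := sqrt_pos.2 (by positivity)
  have hpq : p ≤ q := (le_sqrt hp₀ (by positivity)).2 <| by
    rw [le_div_iff₀ (by positivity), ← mul_assoc]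
    exact hpn
  calc _ ≤ ∑ s ∈ Icc L (5 * L), n.choose s * (s.choose 2).choose (2 * s - 3) *
        p ^ (2 * s - 3) := gnpProb_exists_dense_le hp₀ hp₁ _ (fun s => 2 * s - 3)
    _ ≤ ∑ s ∈ Icc L (5 * L), exp (21 / 2 - 2 / 5 * ℓ) := sum_le_sum fun s hs => by
        obtain ⟨h₁, h₂⟩ := mem_Icc.1 hs
        have hs₁ : ℓ ≤ s := hL₁.trans (by exact_mod_cast h₁)
        have hs₂ : (s : ℝ) ≤ 5 * ℓ + 5 := by
          have : (s : ℝ) ≤ 5 * L := by exact_mod_cast h₂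
          linarith
        calc _ ≤ n.choose s * (s.choose 2).choose (2 * s - 3) * q ^ (2 * s - 3) := by gcongr
          _ ≤ _ := choose_mul_choose_mul_pow_le_exp hq0 hq hℓ hs₁ hs₂
    _ = (4 * L + 1 : ℕ) * exp (21 / 2 - 2 / 5 * ℓ) := by
        rw [sum_const, Nat.card_Icc, nsmul_eq_mul]
        congr 2
        omega
    _ ≤ exp (21 / 2) * ((4 * ℓ + 5) * exp (-(2 / 5 * ℓ))) := by
        rw [sub_eq_add_neg, exp_add, mul_left_comm]
        gcongr
        push_cast
        linarith

theorem le_exp_neg_half_log (hp₀ : 0 ≤ p) (hpn : p ^ 2 * n * log n ≤ 16 / exp 1 ^ 5)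
    (hℓ : 1 ≤ log n) : p ≤ exp (-(1 / 2 * log n)) := by
  have hn0 : (0 : ℝ) < n := by linarith [(log_pos_iff n.cast_nonneg).1 (by linarith : 0 < log n)]
  have he5 : 16 ≤ exp 1 ^ 5 := by
    have := add_one_le_exp 1
    calc (16 : ℝ) ≤ 2 ^ 5 := by norm_num
      _ ≤ exp 1 ^ 5 := by gcongr; linarith
  rw [← pow_le_pow_iff_left₀ hp₀ (exp_pos _).le two_ne_zero, ← exp_nat_mul,
    show ((2 : ℕ) : ℝ) * -(1 / 2 * log n) = -log n by push_cast; ring, exp_neg, exp_log hn0,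
    ← one_div, le_div_iff₀ hn0]
  have : p ^ 2 * n ≤ p ^ 2 * n * log n := le_mul_of_one_le_right (by positivity) hℓ
  have : 16 / exp 1 ^ 5 ≤ 1 := (div_le_one (by positivity)).2 he5
  linarith

theorem gnpProb_percolates_le (hp : p ∈ Set.Ioo (0 : ℝ) 1)
    (hpn : p ^ 2 * n * log n ≤ 16 / exp 1 ^ 5) (hℓ : 200 ≤ log n) :
    gnpProb n p (fun E => Percolates (SimpleGraph.completeGraph (Fin 4)) (E : Set (Sym2 (Fin n))))
      ≤ exp (21 / 2) * ((4 * log n + 5) * exp (-(2 / 5 * log n))) +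
        (log n + 1) * exp (-(1 / 2 * log n)) := by
  obtain ⟨hp₀, hp₁⟩ := hp
  set L := ⌈log n⌉₊
  have hL₁ : log n ≤ L := Nat.le_ceil _
  have hL₂ : (L : ℝ) < log n + 1 := Nat.ceil_lt_add_one (by linarith)
  have hL : 0 < L := Nat.cast_pos.1 (by linarith : (0 : ℝ) < L)
  have hn : 2 ≤ n := Nat.two_le_of_log_pos (by linarith)
  have hsplit := gnpProb_le_add hp₀.le hp₁.le
    (A := fun E => Percolates (SimpleGraph.completeGraph (Fin 4)) (E : Set (Sym2 (Fin n))))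
    (B := fun E => ∃ S : Finset (Fin n), #S ∈ Icc L (5 * L) ∧ 2 * #S - 3 ≤ #(E ∩ S.sym2))
    (C := fun E => n.choose 2 ≤ L * #E) fun E hE hperc => by
      have hdiag : ∀ e ∈ E, ¬e.IsDiag := fun e he =>
        SimpleGraph.not_isDiag_of_mem_edgeSet _ (SimpleGraph.mem_edgeFinset.1 (hE he))
      rcases exists_dense_or_choose_two_le_mul_card hdiag hL
        (fun u v huv => hperc.k4Infected huv) with ⟨S, h₁, h₂, h₃⟩ | h
      · exact .inl ⟨S, mem_Icc.2 ⟨h₁, h₂⟩, h₃⟩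
      · exact .inr (by simpa using h)
  have hdense := gnpProb_exists_dense_le_exp hp₀.le hp₁.le hpn hℓ hL₁ hL₂
  have hsparse : gnpProb n p (fun E => n.choose 2 ≤ L * #E) ≤
      (log n + 1) * exp (-(1 / 2 * log n)) :=
    (gnpProb_choose_two_le_mul_card_le hp₀.le hp₁.le hn hL).trans
      (mul_le_mul hL₂.le (le_exp_neg_half_log hp₀.le hpn (by linarith)) hp₀.le (by linarith))
  linarith

end Threshold

theorem K4_percolation_lower (p : ℕ → ℝ) (hp : ∀ n, p n ∈ Set.Ioo (0 : ℝ) 1)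
    (hbound : ∀ n : ℕ, 2 ≤ n → (p n) ^ 2 * (n : ℝ) * Real.log n ≤ 16 / Real.exp 1 ^ 5) :
    Filter.Tendsto
      (fun n : ℕ => gnpProb n (p n)
        (fun E => Percolates (SimpleGraph.completeGraph (Fin 4)) (↑E : Set (Sym2 (Fin n)))))
      Filter.atTop (nhds 0) := by
  have hlog : Filter.Tendsto (fun n : ℕ => Real.log n) Filter.atTop Filter.atTop :=
    Real.tendsto_log_atTop.comp tendsto_natCast_atTop_atTop
  have hlim := ((tendsto_affine_mul_exp_neg_mul 4 5 (by norm_num : (0 : ℝ) < 2 / 5)).const_mul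
    (Real.exp (21 / 2))).add (tendsto_affine_mul_exp_neg_mul 1 1 (by norm_num : (0 : ℝ) < 1 / 2))
  simp only [mul_zero, add_zero, one_mul] at hlim
  refine tendsto_of_tendsto_of_tendsto_of_le_of_le' tendsto_const_nhds (hlim.comp hlog)
    (Filter.Eventually.of_forall fun n => gnpProb_nonneg (hp n).1.le (hp n).2.le _) ?_
  filter_upwards [hlog.eventually_ge_atTop 200] with n hn
  exact gnpProb_percolates_le (hp n) (hbound n (Nat.two_le_of_log_pos (by linarith))) hn
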